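/- The three sequences V₁(n) = ⌊nφ⌋, V₂(n) = 2⌊nφ⌋ + n − 1, and V₃(n) = 3⌊nφ⌋ + 2n, each for n ≥ 1, form a complementary triple: their value sets are pairwise disjoint and their union is the set of all positive integers. -/

import Mathlib

/-!
Since `1/φ + 1/φ² = 1`, Rayleigh's theorem says that the Beatty sequences `A = {⌊nφ⌋}` and
`B = {⌊nφ²⌋} = {⌊nφ⌋ + n}` partition the positive integers. The map `g m = ⌊mφ²⌋` is strictly
increasing and sends the positive integers onto `B`, so `B = g(A) ⊔ g(B)` and `A`, `g(A)`, `g(B)`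
partition the positive integers. Finally `φ² = φ + 1` gives `g ⌊nφ⌋ = 2⌊nφ⌋ + n - 1` and
`g (g n) = 3⌊nφ⌋ + 2n`.
-/

noncomputable def phi : ℝ := (1 + Real.sqrt 5) / 2

/-- Three sequences (indexed by `n ≥ 1`) form a complementary triple if their value sets
are pairwise disjoint and their union is the set of positive integers. -/
def ComplementaryTriple (V₁ V₂ V₃ : ℕ → ℤ) : Prop :=
  Disjoint {z : ℤ | ∃ n : ℕ, 1 ≤ n ∧ V₁ n = z} {z : ℤ | ∃ n : ℕ, 1 ≤ n ∧ V₂ n = z} ∧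
  Disjoint {z : ℤ | ∃ n : ℕ, 1 ≤ n ∧ V₁ n = z} {z : ℤ | ∃ n : ℕ, 1 ≤ n ∧ V₃ n = z} ∧
  Disjoint {z : ℤ | ∃ n : ℕ, 1 ≤ n ∧ V₂ n = z} {z : ℤ | ∃ n : ℕ, 1 ≤ n ∧ V₃ n = z} ∧
  {z : ℤ | ∃ n : ℕ, 1 ≤ n ∧ V₁ n = z} ∪ {z : ℤ | ∃ n : ℕ, 1 ≤ n ∧ V₂ n = z} ∪
    {z : ℤ | ∃ n : ℕ, 1 ≤ n ∧ V₃ n = z} = {z : ℤ | 0 < z}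

open Set Real goldenRatio
open scoped symmDiff

namespace Set

variable {α : Type*} {A B S : Set α}

theorem disjoint_of_symmDiff_eq (h : A ∆ B = S) (hA : A ⊆ S) : Disjoint A B := by
  refine disjoint_left.mpr fun x hxA hxB ↦ ?_
  have hx := h ▸ hA hxA
  simp only [mem_symmDiff, hxA, hxB, not_true_eq_false, and_false, or_self] at hx

theorem union_eq_of_symmDiff_eq (h : A ∆ B = S) (hA : A ⊆ S) (hB : B ⊆ S) : A ∪ B = S :=
  (union_subset hA hB).antisymm (h ▸ symmDiff_le_sup)

theorem disjoint_union_image_of_partition {g : α → α} (hAB : Disjoint A B) (hS : A ∪ B = S)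
    (hg : InjOn g S) (hgS : g '' S = B) :
    Disjoint A (g '' A) ∧ Disjoint A (g '' B) ∧ Disjoint (g '' A) (g '' B) ∧
      A ∪ g '' A ∪ g '' B = S := by
  have hB : g '' A ∪ g '' B = B := by rw [← image_union, hS, hgS]
  exact ⟨hAB.mono_right (subset_union_left.trans hB.le),
    hAB.mono_right (subset_union_right.trans hB.le),
    hAB.image hg (hS ▸ subset_union_left) (hS ▸ subset_union_right),
    by rw [union_assoc, hB, hS]⟩

end Set

theorem setOf_exists_nat_eq_image_Ioi {V : ℕ → ℤ} {f : ℤ → ℤ}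
    (h : ∀ n : ℕ, 1 ≤ n → V n = f n) :
    {z | ∃ n : ℕ, 1 ≤ n ∧ V n = z} = f '' Ioi 0 := by
  ext z
  constructor
  · rintro ⟨n, hn, rfl⟩
    exact ⟨n, by simp only [mem_Ioi]; omega, (h n hn).symm⟩
  · rintro ⟨k, hk, rfl⟩
    lift k to ℕ using (mem_Ioi.mp hk).le
    have hk : 1 ≤ k := by simp only [mem_Ioi] at hk; omega
    exact ⟨k, hk, h k hk⟩

theorem ComplementaryTriple.of_image {V₁ V₂ V₃ : ℕ → ℤ} {f g : ℤ → ℤ}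
    (h₁ : ∀ n : ℕ, 1 ≤ n → V₁ n = f n) (h₂ : ∀ n : ℕ, 1 ≤ n → V₂ n = g (f n))
    (h₃ : ∀ n : ℕ, 1 ≤ n → V₃ n = g (g n)) (hfg : Disjoint (f '' Ioi 0) (g '' Ioi 0))
    (hunion : f '' Ioi 0 ∪ g '' Ioi 0 = Ioi 0) (hg : InjOn g (Ioi 0)) :
    ComplementaryTriple V₁ V₂ V₃ := by
  rw [ComplementaryTriple, setOf_exists_nat_eq_image_Ioi h₁,
    setOf_exists_nat_eq_image_Ioi (f := g ∘ f) h₂, setOf_exists_nat_eq_image_Ioi (f := g ∘ g) h₃,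
    image_comp, image_comp]
  exact disjoint_union_image_of_partition hfg hunion hg rfl

theorem beattySeq_add_one (r : ℝ) (k : ℤ) : beattySeq (r + 1) k = beattySeq r k + k := by
  simp only [beattySeq, mul_add_one]
  exact Int.floor_add_intCast _ k

theorem beattySeq_strictMono {r : ℝ} (hr : 1 ≤ r) : StrictMono (beattySeq r) := by
  intro k l hkl
  have hkl' : (k : ℝ) + 1 ≤ l := by exact_mod_cast hkl
  calc beattySeq r k < ⌊k * r + 1⌋ := by rw [Int.floor_add_one]; exact lt_add_one _
    _ ≤ beattySeq r l := Int.floor_mono (by nlinarith)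

theorem beattySeq_image_Ioi_subset {r : ℝ} (hr : 1 ≤ r) : beattySeq r '' Ioi 0 ⊆ Ioi 0 := by
  rintro _ ⟨k, hk, rfl⟩
  have hk' : (1 : ℝ) ≤ k := by exact_mod_cast hk
  exact Int.floor_pos.mpr (one_le_mul_of_one_le_of_one_le hk' hr)

theorem holderConjugate_goldenRatio : HolderConjugate φ (φ + 1) := by
  rw [holderConjugate_iff_eq_conjExponent one_lt_goldenRatio,
    eq_div_iff (sub_ne_zero.mpr one_lt_goldenRatio.ne')]
  linear_combination goldenRatio_sq

theorem disjoint_beattySeq_goldenRatio :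
    Disjoint (beattySeq φ '' Ioi 0) (beattySeq (φ + 1) '' Ioi 0) :=
  disjoint_of_symmDiff_eq
    (goldenRatio_irrational.beattySeq_symmDiff_beattySeq_pos holderConjugate_goldenRatio)
    (beattySeq_image_Ioi_subset one_lt_goldenRatio.le)

theorem union_beattySeq_goldenRatio :
    beattySeq φ '' Ioi 0 ∪ beattySeq (φ + 1) '' Ioi 0 = Ioi 0 :=
  union_eq_of_symmDiff_eq
    (goldenRatio_irrational.beattySeq_symmDiff_beattySeq_pos holderConjugate_goldenRatio)
    (beattySeq_image_Ioi_subset one_lt_goldenRatio.le)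
    (beattySeq_image_Ioi_subset (le_add_of_nonneg_left goldenRatio_pos.le))

theorem fract_intCast_mul_goldenRatio_pos {k : ℤ} (hk : k ≠ 0) : 0 < Int.fract (k * φ) :=
  Int.fract_pos.mpr ((goldenRatio_irrational.intCast_mul hk).ne_int _)

-- With `f = fract (kφ)`, the error terms `f (φ - 1)` here and `f (2 - φ)` below lie in `(0, 1)`
-- for `k ≠ 0`, which pins down `⌊⌊kφ⌋ φ⌋` and `⌊(k + ⌊kφ⌋) φ⌋`.
theorem beattySeq_goldenRatio_mul_goldenRatio (k : ℤ) :
    (beattySeq φ k : ℝ) * φ = beattySeq φ k + k - Int.fract (k * φ) * (φ - 1) := by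
  have hk : (beattySeq φ k : ℝ) + Int.fract (k * φ) = k * φ := Int.floor_add_fract _
  linear_combination (φ - 1) * hk + k * goldenRatio_sq

theorem beattySeq_goldenRatio_beattySeq_goldenRatio {k : ℤ} (hk : k ≠ 0) :
    beattySeq φ (beattySeq φ k) = beattySeq φ k + k - 1 := by
  have hf₀ := fract_intCast_mul_goldenRatio_pos hk
  have hf₁ := Int.fract_lt_one ((k : ℝ) * φ)
  have herr₀ : 0 < Int.fract (k * φ) * (φ - 1) := mul_pos hf₀ (by linarith [one_lt_goldenRatio])
  have herr₁ : Int.fract (k * φ) * (φ - 1) < 1 := by nlinarith [goldenRatio_lt_two]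
  rw [beattySeq, Int.floor_eq_iff, beattySeq_goldenRatio_mul_goldenRatio]
  push_cast
  constructor <;> linarith

theorem beattySeq_goldenRatio_add_beattySeq_goldenRatio {k : ℤ} (hk : k ≠ 0) :
    beattySeq φ (k + beattySeq φ k) = 2 * beattySeq φ k + k := by
  have hf₀ := fract_intCast_mul_goldenRatio_pos hk
  have hf₁ := Int.fract_lt_one ((k : ℝ) * φ)
  have herr₀ : 0 < Int.fract (k * φ) * (2 - φ) := mul_pos hf₀ (by linarith [goldenRatio_lt_two])
  have herr₁ : Int.fract (k * φ) * (2 - φ) < 1 := by nlinarith [one_lt_goldenRatio]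
  have hkφ : (beattySeq φ k : ℝ) + Int.fract (k * φ) = k * φ := Int.floor_add_fract _
  rw [beattySeq, Int.floor_eq_iff]
  push_cast
  rw [add_mul, beattySeq_goldenRatio_mul_goldenRatio]
  constructor <;> linarith

theorem second_classical_triple :
    ComplementaryTriple
      (fun n => ⌊(n : ℝ) * phi⌋)
      (fun n => 2 * ⌊(n : ℝ) * phi⌋ + n - 1)
      (fun n => 3 * ⌊(n : ℝ) * phi⌋ + 2 * n) := by
  have hf (n : ℕ) : ⌊(n : ℝ) * phi⌋ = beattySeq φ n := by simp [beattySeq, phi]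
  refine ComplementaryTriple.of_image (f := beattySeq φ) (g := beattySeq (φ + 1))
    (fun n _ ↦ hf n) (fun n hn ↦ ?_) (fun n hn ↦ ?_) disjoint_beattySeq_goldenRatio
    union_beattySeq_goldenRatio
    (beattySeq_strictMono (le_add_of_nonneg_left goldenRatio_pos.le)).injective.injOn
  · rw [hf, beattySeq_add_one, beattySeq_goldenRatio_beattySeq_goldenRatio (by omega)]
    ring
  · rw [hf, beattySeq_add_one, beattySeq_add_one, add_comm (beattySeq φ n),
      beattySeq_goldenRatio_add_beattySeq_goldenRatio (by omega)]
    ring
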